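/- arXiv:2308.08604 — 6 statements merged into one kernel-verified Lean document; each statement's English description precedes it below -/
import Mathlib

section
/- Let n ≥ 2. Then the v-number of the edge ideal of the path graph P_n is given by v(P_n) = ⌊n/4⌋ if n ≡ 0 or 1 (mod 4), and v(P_n) = ⌊n/4⌋ + 1 if n ≡ 2 or 3 (mod 4). -/
open MvPolynomial

noncomputable section

/-- The `v`-number of a graded ideal `I ⊆ K[x_1,…,x_t]`: the least `k ≥ 0` such that there is a
homogeneous polynomial `f` of degree `k` with `(I : f)` an associated prime of `S/I`. -/
def vNumber {σ K : Type*} [Field K] (I : Ideal (MvPolynomial σ K)) : ℕ :=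
  sInf {k : ℕ | ∃ f : MvPolynomial σ K, f.IsHomogeneous k ∧
    Submodule.colon I (Ideal.span {f}) ∈
      associatedPrimes (MvPolynomial σ K) (MvPolynomial σ K ⧸ I)}

/-- The edge ideal of a simple graph: generated by `x_i * x_j` for edges `{x_i, x_j}`. -/
def edgeIdeal (K : Type*) [Field K] {V : Type*} (G : SimpleGraph V) :
    Ideal (MvPolynomial V K) :=
  Ideal.span {m | ∃ i j, G.Adj i j ∧ m = X i * X j}

/-- `I` is a monomial ideal: generated by a set of monomials. -/
def IsMonomialIdeal {σ K : Type*} [Field K] (I : Ideal (MvPolynomial σ K)) : Prop :=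
  ∃ A : Set (σ →₀ ℕ), I = Ideal.span ((fun a => (monomial a (1 : K))) '' A)

/-- The graded maximal ideal `𝔪 = ⟨x_1,…,x_t⟩`. -/
def maxIdeal (K : Type*) [Field K] (σ : Type*) : Ideal (MvPolynomial σ K) :=
  Ideal.span (Set.range (X : σ → MvPolynomial σ K))

/-- `α(I)`: the minimum degree of a nonzero element of `I`. -/
def alphaNumber {σ K : Type*} [Field K] (I : Ideal (MvPolynomial σ K)) : ℕ :=
  sInf {d : ℕ | ∃ f ∈ I, f ≠ 0 ∧ f.totalDegree = d}

/-- Exponent vectors of the minimal monomial generators of a monomial ideal `I`: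
monomials in `I` none of whose proper divisors lies in `I`. -/
def minimalGenerators {σ K : Type*} [Field K] (I : Ideal (MvPolynomial σ K)) :
    Set (σ →₀ ℕ) :=
  {a | (monomial a (1 : K)) ∈ I ∧
    ∀ b : σ →₀ ℕ, b ≤ a → b ≠ a → (monomial b (1 : K)) ∉ I}

/-!
If `A = supp a` is an independent set of `G` whose neighbourhood `N(A)` is a vertex cover, then
`(I(G) : x^a)` is the prime ideal generated by the variables of `N(A)`, of degree `|A|`.
Conversely, if `(I(G) : f)` is prime, some monomial `x^d` of `f` lies outside `I(G)`, so `supp d`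
is independent with `|supp d| ≤ deg f`; the variables in `(I(G) : f)` form a vertex cover, and each
of them lies in `N(supp d)` because `x_i f ∈ I(G)`. Hence `v(G)` is the least size of an
independent set whose neighbourhood covers all edges.

In `P_n` a vertex cover meets each of the `⌊n/2⌋` disjoint edges `{2m, 2m+1}` and
`|N(A)| ≤ 2|A|`, so `|A| ≥ ⌈⌊n/2⌋/2⌉`; this bound is attained by the vertices `≡ 1 (mod 4)`, or
`≡ 2 (mod 4)` when `n ≡ 1 (mod 4)`.
-/

open Finset

namespace Finsupp

variable {V : Type*}

theorem single_add_single_le_iff {i j : V} (hij : i ≠ j) {d : V →₀ ℕ} :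
    single i 1 + single j 1 ≤ d ↔ d i ≠ 0 ∧ d j ≠ 0 := by
  classical
  refine ⟨fun h => ?_, fun h => le_def.2 fun k => ?_⟩
  · have hi : single i 1 ≤ d := le_trans le_self_add h
    have hj : single j 1 ≤ d := le_trans le_add_self h
    rw [single_le_iff] at hi hj
    omega
  · simp only [add_apply, single_apply]
    split_ifs <;> subst_vars <;> simp_all <;> omega

theorem card_support_le_degree (d : V →₀ ℕ) : d.support.card ≤ d.degree := by
  classical
  calc d.support.card = d.toMultiset.toFinset.card := by rw [toFinset_toMultiset]
    _ ≤ Multiset.card d.toMultiset := Multiset.toFinset_card_le _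
    _ = d.degree := card_toMultiset d

end Finsupp

namespace MvPolynomial

variable {σ R : Type*} [CommRing R]

theorem sub_aeval_mem_span_X_image (s : Set σ) [DecidablePred (· ∈ s)] (p : MvPolynomial σ R) :
    p - aeval (fun i => if i ∈ s then 0 else X i) p ∈ Ideal.span (X '' s) := by
  induction p using MvPolynomial.induction_on with
  | C a => simp
  | add p q hp hq => simpa [add_sub_add_comm] using add_mem hp hq
  | mul_X p i hp =>
    by_cases hi : i ∈ s
    · simpa [hi] using Ideal.mul_mem_left _ p (Ideal.subset_span (Set.mem_image_of_mem X hi))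
    · simpa [hi, ← sub_mul] using Ideal.mul_mem_right (X i) _ hp

theorem isPrime_span_X_image [IsDomain R] (s : Set σ) :
    (Ideal.span (X '' s : Set (MvPolynomial σ R))).IsPrime := by
  classical
  let φ : MvPolynomial σ R →ₐ[R] MvPolynomial σ R := aeval fun i => if i ∈ s then 0 else X i
  suffices Ideal.span (X '' s) = RingHom.ker φ by rw [this]; exact RingHom.ker_isPrime _
  refine le_antisymm (Ideal.span_le.2 ?_) fun p hp => ?_
  · rintro _ ⟨i, hi, rfl⟩
    simp [φ, hi]
  · have hφ : φ p = 0 := hp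
    simpa only [φ, hφ, sub_zero] using sub_aeval_mem_span_X_image s p

end MvPolynomial

theorem Ideal.colon_span_singleton_mem_associatedPrimes {R : Type*} [CommRing R] {I : Ideal R}
    {f : R} (h : (I.colon (Ideal.span {f})).IsPrime) :
    I.colon (Ideal.span {f}) ∈ associatedPrimes R (R ⧸ I) := by
  have hcolon :
      I.colon (Ideal.span {f}) = (⊥ : Submodule R (R ⧸ I)).colon {Ideal.Quotient.mk I f} := by
    ext r
    rw [Submodule.mem_colon_singleton, Ideal.mem_colon_span_singleton, Submodule.mem_bot,
      Algebra.smul_def, Ideal.Quotient.algebraMap_eq, ← map_mul, Ideal.Quotient.eq_zero_iff_mem]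
  exact ⟨h, Ideal.Quotient.mk I f, by rw [← hcolon, h.radical]⟩

section EdgeIdeal

variable {K V : Type*} [Field K] {G : SimpleGraph V}

theorem edgeIdeal_eq_span_monomial (G : SimpleGraph V) :
    edgeIdeal K G = Ideal.span ((fun a => monomial a (1 : K)) ''
      {a | ∃ i j, G.Adj i j ∧ a = Finsupp.single i 1 + Finsupp.single j 1}) := by
  rw [edgeIdeal]
  congr 1
  ext m
  simp [X, monomial_mul, eq_comm]

theorem mem_edgeIdeal_iff {f : MvPolynomial V K} :
    f ∈ edgeIdeal K G ↔ ∀ d ∈ f.support, ∃ i j, G.Adj i j ∧ d i ≠ 0 ∧ d j ≠ 0 := by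
  simp only [edgeIdeal_eq_span_monomial, mem_ideal_span_monomial_image]
  refine forall₂_congr fun d _ => ⟨?_, ?_⟩
  · rintro ⟨_, ⟨i, j, hij, rfl⟩, hle⟩
    exact ⟨i, j, hij, (Finsupp.single_add_single_le_iff hij.ne).1 hle⟩
  · rintro ⟨i, j, hij, hd⟩
    exact ⟨_, ⟨i, j, hij, rfl⟩, (Finsupp.single_add_single_le_iff hij.ne).2 hd⟩

theorem monomial_mem_edgeIdeal_iff {d : V →₀ ℕ} :
    monomial d (1 : K) ∈ edgeIdeal K G ↔ ∃ i j, G.Adj i j ∧ d i ≠ 0 ∧ d j ≠ 0 := by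
  classical
  simp [mem_edgeIdeal_iff, support_monomial]

theorem edgeIdeal_colon_monomial {a : V →₀ ℕ} (hind : G.IsIndepSet a.support)
    (hcov : G.IsVertexCover (⋃ i ∈ a.support, G.neighborSet i)) :
    (edgeIdeal K G).colon (Ideal.span {monomial a (1 : K)}) =
      Ideal.span (X '' ⋃ i ∈ a.support, G.neighborSet i) := by
  have mem_nbhd {k : V} :
      k ∈ ⋃ i ∈ a.support, G.neighborSet i ↔ ∃ i, a i ≠ 0 ∧ G.Adj i k := by
    simp
  refine le_antisymm (fun r hr => ?_) (Ideal.span_le.2 ?_)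
  · rw [mem_ideal_span_X_image]
    intro d hd
    have hda : d + a ∈ (r * monomial a 1).support := by
      simpa [coeff_mul_monomial] using hd
    obtain ⟨i, j, hij, hi, hj⟩ :=
      mem_edgeIdeal_iff.1 (Ideal.mem_colon_span_singleton.1 hr) _ hda
    simp only [Finsupp.add_apply, ne_eq, Nat.add_eq_zero_iff, not_and_or] at hi hj
    by_cases hai : a i = 0
    · by_cases haj : a j = 0
      · rcases hcov hij with h | h
        · exact ⟨i, h, by tauto⟩
        · exact ⟨j, h, by tauto⟩
      · exact ⟨i, mem_nbhd.2 ⟨j, haj, hij.symm⟩, by tauto⟩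
    · have haj : a j = 0 := by
        by_contra haj
        exact hind (by simpa using hai) (by simpa using haj) hij.ne hij
      exact ⟨j, mem_nbhd.2 ⟨i, hai, hij⟩, by tauto⟩
  · rintro _ ⟨k, hk, rfl⟩
    obtain ⟨i, hai, hik⟩ := mem_nbhd.1 hk
    rw [SetLike.mem_coe, Ideal.mem_colon_span_singleton, X, monomial_mul, one_mul,
      monomial_mem_edgeIdeal_iff]
    exact ⟨k, i, hik.symm, by simp, by simp [hai]⟩

theorem exists_isIndepSet_support_of_notMem_edgeIdeal {f : MvPolynomial V K}
    (hf : f ∉ edgeIdeal K G) : ∃ d ∈ f.support, G.IsIndepSet d.support := by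
  contrapose! hf
  refine mem_edgeIdeal_iff.2 fun d hd => ?_
  obtain ⟨i, hi, j, hj, -, hij⟩ : ∃ i ∈ d.support, ∃ j ∈ d.support, i ≠ j ∧ G.Adj i j := by
    simpa [Set.Pairwise] using hf d hd
  exact ⟨i, j, hij, by simpa using hi, by simpa using hj⟩

theorem exists_adj_mem_support_of_X_mul_mem_edgeIdeal {f : MvPolynomial V K} {d : V →₀ ℕ}
    (hd : d ∈ f.support) (hind : G.IsIndepSet d.support) {i : V}
    (hi : X i * f ∈ edgeIdeal K G) : ∃ j ∈ d.support, G.Adj i j := by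
  have hid : Finsupp.single i 1 + d ∈ (X i * f).support := by
    simpa [X, coeff_monomial_mul] using hd
  obtain ⟨p, q, hpq, hp, hq⟩ := mem_edgeIdeal_iff.1 hi _ hid
  wlog hdp : d p = 0 generalizing p q
  · have hdq : d q = 0 := by
      by_contra hdq
      exact hind (by simpa using hdp) (by simpa using hdq) hpq.ne hpq
    exact this q p hpq.symm hq hp hdq
  obtain rfl : p = i := by
    by_contra hpi
    simp [Ne.symm hpi, hdp] at hp
  exact ⟨q, by simpa [Finsupp.single_apply, hpq.ne] using hq, hpq⟩

theorem exists_isIndepSet_card_le_of_colon_isPrime {f : MvPolynomial V K} {k : ℕ}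
    (hf : f.IsHomogeneous k) (hP : ((edgeIdeal K G).colon (Ideal.span {f})).IsPrime) :
    ∃ A : Finset V, G.IsIndepSet A ∧ G.IsVertexCover (⋃ i ∈ A, G.neighborSet i) ∧
      A.card ≤ k := by
  have hfI : f ∉ edgeIdeal K G := fun hf => hP.ne_top <|
    (Ideal.eq_top_iff_one _).2 (Ideal.mem_colon_span_singleton.2 (by simpa using hf))
  obtain ⟨d, hd, hind⟩ := exists_isIndepSet_support_of_notMem_edgeIdeal hfI
  refine ⟨d.support, hind, fun i j hij => ?_, ?_⟩
  · have hXX : X i * X j ∈ (edgeIdeal K G).colon (Ideal.span {f}) :=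
      Ideal.mem_colon_span_singleton.2 <|
        Ideal.mul_mem_right _ _ (Ideal.subset_span ⟨i, j, hij, rfl⟩)
    have hN {l : V} (hl : X l ∈ (edgeIdeal K G).colon (Ideal.span {f})) :
        l ∈ ⋃ i ∈ d.support, G.neighborSet i := by
      obtain ⟨m, hm, hadj⟩ := exists_adj_mem_support_of_X_mul_mem_edgeIdeal hd hind
        (Ideal.mem_colon_span_singleton.1 hl)
      exact Set.mem_biUnion hm hadj.symm
    exact (hP.mem_or_mem hXX).imp hN hN
  · calc d.support.card ≤ d.degree := Finsupp.card_support_le_degree d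
      _ = k := by_contra fun h => mem_support_iff.1 hd (hf.coeff_eq_zero h)

theorem vNumber_edgeIdeal (G : SimpleGraph V) :
    vNumber (edgeIdeal K G) = sInf {k | ∃ A : Finset V, G.IsIndepSet A ∧
      G.IsVertexCover (⋃ i ∈ A, G.neighborSet i) ∧ A.card = k} := by
  classical
  refine csInf_eq_csInf_of_forall_exists_le ?_ ?_
  · rintro k ⟨f, hf, hP⟩
    obtain ⟨A, hind, hcov, hk⟩ := exists_isIndepSet_card_le_of_colon_isPrime hf hP.isPrime
    exact ⟨A.card, ⟨A, hind, hcov, rfl⟩, hk⟩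
  · rintro _ ⟨A, hind, hcov, rfl⟩
    set a := Multiset.toFinsupp A.val
    have ha : a.support = A := by simp [a]
    have hdeg : a.degree = A.card := Multiset.toFinsupp_sum_eq A.val
    refine ⟨A.card, ⟨monomial a 1, isHomogeneous_monomial 1 hdeg, ?_⟩, le_rfl⟩
    rw [← ha] at hind hcov
    apply Ideal.colon_span_singleton_mem_associatedPrimes
    rw [edgeIdeal_colon_monomial hind hcov]
    exact isPrime_span_X_image _

end EdgeIdeal

theorem Fin.card_filter_val_mod_eq {n m s : ℕ} (hs : s < m) :
    #(univ.filter fun i : Fin n => i.val % m = s) = n / m + if s < n % m then 1 else 0 := by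
  rw [← Nat.mod_eq_of_lt hs, ← Nat.count_modEq_card n (by omega), Nat.count_eq_card_filter_range,
    ← Nat.Iio_eq_range, ← Fin.map_valEmbedding_univ, filter_map, card_map]
  rfl

namespace SimpleGraph

variable {n : ℕ}

instance : DecidableRel (pathGraph n).Adj := fun _ _ => decidable_of_iff' _ pathGraph_adj

theorem pathGraph_degree_le_two (v : Fin n) : (pathGraph n).degree v ≤ 2 := by
  have hsub : ((pathGraph n).neighborFinset v).image Fin.val ⊆ {v.val - 1, v.val + 1} := by
    intro m hm
    obtain ⟨w, hw, rfl⟩ := mem_image.1 hm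
    rw [mem_neighborFinset, pathGraph_adj] at hw
    simp only [mem_insert, mem_singleton]
    omega
  calc (pathGraph n).degree v = #(((pathGraph n).neighborFinset v).image Fin.val) :=
        (card_image_of_injective _ Fin.val_injective).symm
    _ ≤ 2 := (card_le_card hsub).trans card_le_two

theorem pathGraph_card_biUnion_neighborFinset_le (A : Finset (Fin n)) :
    #(A.biUnion fun a => (pathGraph n).neighborFinset a) ≤ 2 * #A :=
  calc #(A.biUnion fun a => (pathGraph n).neighborFinset a) ≤ ∑ a ∈ A, (pathGraph n).degree a :=
        card_biUnion_le
    _ ≤ ∑ _a ∈ A, 2 := sum_le_sum fun a _ => pathGraph_degree_le_two a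
    _ = 2 * #A := by rw [sum_const, smul_eq_mul, mul_comm]

theorem pathGraph_div_two_le_card_of_isVertexCover {C : Finset (Fin n)}
    (hC : (pathGraph n).IsVertexCover C) : n / 2 ≤ #C := by
  have hpair : ∀ m : Fin (n / 2), ∃ c ∈ C, c.val / 2 = m.val := by
    intro m
    have hadj : (pathGraph n).Adj ⟨2 * m, by omega⟩ ⟨2 * m + 1, by omega⟩ :=
      pathGraph_adj.2 (Or.inl rfl)
    rcases hC hadj with h | h
    · exact ⟨_, h, by simp⟩
    · exact ⟨_, h, by simp; omega⟩
  choose g hgC hg using hpair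
  simpa using card_le_card_of_injOn (s := univ) g (fun m _ => hgC m) fun m _ m' _ h =>
    Fin.ext (by rw [← hg m, ← hg m', h])

theorem pathGraph_le_card_of_isVertexCover_neighborSet {A : Finset (Fin n)}
    (hA : (pathGraph n).IsVertexCover (⋃ i ∈ A, (pathGraph n).neighborSet i)) :
    (n / 2 + 1) / 2 ≤ #A := by
  have hcover : n / 2 ≤ #(A.biUnion fun a => (pathGraph n).neighborFinset a) :=
    pathGraph_div_two_le_card_of_isVertexCover (by simpa using hA)
  have := pathGraph_card_biUnion_neighborFinset_le A
  omega

theorem pathGraph_isIndepSet_mod_four (s : ℕ) :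
    (pathGraph n).IsIndepSet (univ.filter fun i : Fin n => i.val % 4 = s : Finset (Fin n)) := by
  intro i hi j hj _ hij
  simp only [coe_filter, mem_univ, true_and, Set.mem_ofPred_eq] at hi hj
  rw [pathGraph_adj] at hij
  omega

theorem pathGraph_isVertexCover_neighborSet_mod_four {s : ℕ} (hs : s < 3) (hns : n % 4 ≠ s) :
    (pathGraph n).IsVertexCover
      (⋃ a ∈ univ.filter fun i : Fin n => i.val % 4 = s, (pathGraph n).neighborSet a) := by
  set N := ⋃ a ∈ univ.filter fun i : Fin n => i.val % 4 = s, (pathGraph n).neighborSet a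
  have hmem {v : Fin n} (w : ℕ) (hw : w < n) (hws : w % 4 = s) (hadj : w + 1 = v ∨ v + 1 = w) :
      v ∈ N :=
    Set.mem_biUnion (x := ⟨w, hw⟩) (by simpa using hws) (pathGraph_adj.2 hadj)
  suffices ∀ i j : Fin n, i.val + 1 = j → i ∈ N ∨ j ∈ N by
    intro i j hij
    rcases pathGraph_adj.1 hij with h | h
    · exact this i j h
    · exact (this j i h).symm
  intro i j hij
  -- One of `i - 1, i, i + 1, i + 2` is `≡ s`: `s < 3` makes `i - 1` unnecessary when `i = 0`,
  -- and `n % 4 ≠ s` guarantees `i + 2 < n` when `i + 2` is needed.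
  by_cases h₀ : 1 ≤ i.val ∧ (i.val - 1) % 4 = s
  · exact Or.inl (hmem (i - 1) (by omega) h₀.2 (by omega))
  by_cases h₁ : i.val % 4 = s
  · exact Or.inr (hmem i i.isLt h₁ (by omega))
  by_cases h₂ : (i.val + 1) % 4 = s
  · exact Or.inl (hmem (i + 1) (by omega) h₂ (by omega))
  · exact Or.inr (hmem (i + 2) (by omega) (by omega) (by omega))

theorem pathGraph_exists_isIndepSet_isVertexCover_neighborSet :
    ∃ A : Finset (Fin n), (pathGraph n).IsIndepSet A ∧
      (pathGraph n).IsVertexCover (⋃ i ∈ A, (pathGraph n).neighborSet i) ∧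
      #A = if n % 4 = 0 ∨ n % 4 = 1 then n / 4 else n / 4 + 1 := by
  set s := if n % 4 = 1 then 2 else 1 with hs
  have hs' : s = 1 ∧ n % 4 ≠ 1 ∨ s = 2 ∧ n % 4 = 1 := by split_ifs at hs <;> omega
  refine ⟨univ.filter fun i : Fin n => i.val % 4 = s, pathGraph_isIndepSet_mod_four s,
    pathGraph_isVertexCover_neighborSet_mod_four (by omega) (by omega), ?_⟩
  rw [Fin.card_filter_val_mod_eq (by omega)]
  split_ifs <;> omega

end SimpleGraph

theorem vNumber_pathGraph_general {K : Type*} [Field K] (n : ℕ) :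
    vNumber (edgeIdeal K (SimpleGraph.pathGraph n)) =
      if n % 4 = 0 ∨ n % 4 = 1 then n / 4 else n / 4 + 1 := by
  obtain ⟨A, hind, hcov, hA⟩ :=
    SimpleGraph.pathGraph_exists_isIndepSet_isVertexCover_neighborSet (n := n)
  rw [vNumber_edgeIdeal, ← hA]
  refine le_antisymm (Nat.sInf_le ⟨A, hind, hcov, rfl⟩) (le_csInf ⟨_, A, hind, hcov, rfl⟩ ?_)
  rintro _ ⟨B, -, hB, rfl⟩
  have := SimpleGraph.pathGraph_le_card_of_isVertexCover_neighborSet hB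
  split_ifs at hA <;> omega

/-- For n ≥ 2, v(P_n) = ⌊n/4⌋ if n ≡ 0,1 (mod 4) and ⌊n/4⌋ + 1 if n ≡ 2,3 (mod 4). -/
theorem vNumber_pathGraph {K : Type*} [Field K] (n : ℕ) (hn : 2 ≤ n) :
    vNumber (edgeIdeal K (SimpleGraph.pathGraph n)) =
      if n % 4 = 0 ∨ n % 4 = 1 then n / 4 else n / 4 + 1 :=
  vNumber_pathGraph_general n
end
end

section
/- Let I ⊆ S = K[x_1,…,x_t] be an 𝔪-primary monomial ideal, and let M be the set of all t×t matrices A = (a_ij) with nonnegative integer entries such that: each row of A is the exponent vector of some element of G(I); a_ii > a_li for every i and every l ≠ i; and the monomial x_1^{a_11 − 1} x_2^{a_22 − 1} ⋯ x_t^{a_tt − 1} does not belong to I. Then M is nonempty and v(I) = min{ (a_11 + a_22 + ⋯ + a_tt) − t : A = (a_ij) ∈ M }. -/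
open MvPolynomial

noncomputable section

/-! The socle monomials of `S/I` are the `x^c ∉ I` with `x_i x^c ∈ I` for all `i`; these are
exactly the monomials `f` with `(I : f) = 𝔪`, the only associated prime of an `𝔪`-primary ideal.
A homogeneous `f` with `(I : f) = 𝔪` has such a monomial in its support, so `v(I)` is the least
degree of a socle monomial. For a socle monomial `x^c`, choosing a minimal generator dividing
`x_i x^c` for each `i` gives the rows of a matrix in `M` with diagonal `c + 1`, and conversely the
diagonal of a matrix in `M` minus one is the exponent of a socle monomial. -/

section

variable {σ K : Type*} [Field K]

theorem mem_maxIdeal_iff {f : MvPolynomial σ K} : f ∈ maxIdeal K σ ↔ constantCoeff f = 0 := by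
  rw [maxIdeal, ← Set.image_univ, mem_ideal_span_X_image, constantCoeff_eq, ← notMem_support_iff]
  constructor
  · intro h h0
    obtain ⟨i, -, hi⟩ := h 0 h0
    exact hi rfl
  · intro h m hm
    by_contra! hm0
    exact h (by rwa [show m = 0 from Finsupp.ext fun i => hm0 i trivial] at hm)

theorem isMaximal_maxIdeal : (maxIdeal K σ).IsMaximal := by
  have : maxIdeal K σ = RingHom.ker constantCoeff := Ideal.ext fun _ => mem_maxIdeal_iff
  rw [this]
  exact RingHom.ker_isMaximal_of_surjective _ fun k => ⟨C k, constantCoeff_C σ k⟩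

theorem X_mem_maxIdeal (i : σ) : (X i : MvPolynomial σ K) ∈ maxIdeal K σ :=
  Ideal.subset_span ⟨i, rfl⟩

theorem one_notMem_of_radical_eq_maxIdeal {I : Ideal (MvPolynomial σ K)}
    (hrad : I.radical = maxIdeal K σ) : (1 : MvPolynomial σ K) ∉ I := fun h =>
  isMaximal_maxIdeal.ne_top (hrad ▸ I.radical_eq_top.2 ((Ideal.eq_top_iff_one I).2 h))

theorem associatedPrimes_eq_singleton_maxIdeal [Finite σ] {I : Ideal (MvPolynomial σ K)}
    (hrad : I.radical = maxIdeal K σ) :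
    associatedPrimes (MvPolynomial σ K) (MvPolynomial σ K ⧸ I) = {maxIdeal K σ} :=
  hrad ▸ associatedPrimes.eq_singleton_of_isPrimary
    (Ideal.isPrimary_of_isMaximal_radical (hrad ▸ isMaximal_maxIdeal))

theorem colon_span_singleton_eq_maxIdeal_iff {I : Ideal (MvPolynomial σ K)}
    {f : MvPolynomial σ K} :
    Submodule.colon I (Ideal.span {f}) = maxIdeal K σ ↔ f ∉ I ∧ ∀ i, X i * f ∈ I := by
  have hle : maxIdeal K σ ≤ Submodule.colon I (Ideal.span {f}) ↔ ∀ i, X i * f ∈ I := by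
    simp only [maxIdeal, Ideal.span_le, Set.range_subset_iff, SetLike.mem_coe,
      Ideal.mem_colon_span_singleton]
  have hne : Submodule.colon I (Ideal.span {f}) ≠ ⊤ ↔ f ∉ I := by
    rw [Ne, Ideal.eq_top_iff_one, Ideal.mem_colon_span_singleton, one_mul]
  constructor
  · intro h
    exact ⟨hne.1 (h ▸ isMaximal_maxIdeal.ne_top), hle.1 h.ge⟩
  · rintro ⟨hf, hXf⟩
    exact (isMaximal_maxIdeal.eq_of_le (hne.2 hf) (hle.2 hXf)).symm

theorem monomial_mem_of_le {I : Ideal (MvPolynomial σ K)} {b c : σ →₀ ℕ} (hbc : b ≤ c)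
    (hb : monomial b (1 : K) ∈ I) : monomial c (1 : K) ∈ I := by
  obtain ⟨d, rfl⟩ := exists_add_of_le hbc
  rw [← mul_one (1 : K), ← monomial_mul]
  exact I.mul_mem_right _ hb

theorem exists_mem_minimalGenerators_le {I : Ideal (MvPolynomial σ K)} {c : σ →₀ ℕ}
    (hc : monomial c (1 : K) ∈ I) : ∃ g ∈ minimalGenerators I, g ≤ c := by
  obtain ⟨g, ⟨hgc, hg⟩, hmin⟩ :=
    wellFounded_lt.has_min {b | b ≤ c ∧ monomial b (1 : K) ∈ I} ⟨c, le_rfl, hc⟩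
  exact ⟨g, ⟨hg, fun b hbg hne hb => hmin b ⟨hbg.trans hgc, hb⟩ (hbg.lt_of_ne hne)⟩, hgc⟩

theorem IsMonomialIdeal.mem_iff {I : Ideal (MvPolynomial σ K)} (hI : IsMonomialIdeal I)
    {f : MvPolynomial σ K} : f ∈ I ↔ ∀ m ∈ f.support, monomial m (1 : K) ∈ I := by
  classical
  obtain ⟨A, rfl⟩ := hI
  refine mem_ideal_span_monomial_image.trans (forall₂_congr fun m _ => ?_)
  rw [mem_ideal_span_monomial_image, support_monomial, if_neg one_ne_zero]
  simp

def IsSocleExponent (I : Ideal (MvPolynomial σ K)) (c : σ →₀ ℕ) : Prop :=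
  monomial c (1 : K) ∉ I ∧ ∀ i, monomial (c + Finsupp.single i 1) (1 : K) ∈ I

theorem colon_monomial_eq_maxIdeal_iff {I : Ideal (MvPolynomial σ K)} {c : σ →₀ ℕ} :
    Submodule.colon I (Ideal.span {monomial c (1 : K)}) = maxIdeal K σ ↔ IsSocleExponent I c := by
  have hX (i : σ) : X i * monomial c (1 : K) = monomial (c + Finsupp.single i 1) 1 := by
    rw [add_comm, monomial_single_add, pow_one]
  simp only [colon_span_singleton_eq_maxIdeal_iff, IsSocleExponent, hX]

theorem exists_isSocleExponent_of_colon_eq_maxIdeal {I : Ideal (MvPolynomial σ K)}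
    (hI : IsMonomialIdeal I) {f : MvPolynomial σ K} {k : ℕ} (hf : f.IsHomogeneous k)
    (hcol : Submodule.colon I (Ideal.span {f}) = maxIdeal K σ) :
    ∃ c, IsSocleExponent I c ∧ c.degree = k := by
  obtain ⟨hfI, hXf⟩ := colon_span_singleton_eq_maxIdeal_iff.1 hcol
  obtain ⟨c, hc, hcI⟩ := not_forall₂.1 (hI.mem_iff.not.1 hfI)
  refine ⟨c, ⟨hcI, fun i => hI.mem_iff.1 (hXf i) _ ?_⟩, ?_⟩
  · rw [mem_support_iff, add_comm, coeff_X_mul]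
    exact mem_support_iff.1 hc
  · rw [Finsupp.degree_eq_weight_one]
    exact hf (mem_support_iff.1 hc)

theorem vNumber_eq_sInf_degree_socle [Finite σ] {I : Ideal (MvPolynomial σ K)}
    (hI : IsMonomialIdeal I) (hrad : I.radical = maxIdeal K σ) :
    vNumber I = sInf (Finsupp.degree '' {c | IsSocleExponent I c}) := by
  rw [vNumber, associatedPrimes_eq_singleton_maxIdeal hrad]
  congr 1
  ext k
  simp only [Set.mem_singleton_iff, Set.mem_image]
  constructor
  · rintro ⟨f, hf, hcol⟩
    exact exists_isSocleExponent_of_colon_eq_maxIdeal hI hf hcol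
  · rintro ⟨c, hc, rfl⟩
    exact ⟨monomial c 1, isHomogeneous_monomial _ rfl, colon_monomial_eq_maxIdeal_iff.2 hc⟩

theorem exists_isSocleExponent [Finite σ] {I : Ideal (MvPolynomial σ K)}
    (hrad : I.radical = maxIdeal K σ) : ∃ c, IsSocleExponent I c := by
  classical
  have hpow (i : σ) : ∃ n, monomial (Finsupp.single i n) (1 : K) ∈ I := by
    obtain ⟨n, hn⟩ : X i ∈ I.radical := hrad ▸ X_mem_maxIdeal i
    exact ⟨n, by rwa [X_pow_eq_monomial] at hn⟩
  choose n hn using hpow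
  -- every exponent outside `I` is below the pure powers `x_i ^ n i` in `I`
  have hfin : {c | monomial c (1 : K) ∉ I}.Finite := by
    refine (Set.finite_Iic (Finsupp.equivFunOnFinite.symm n)).subset fun c hc => ?_
    refine Finsupp.le_def.2 fun i => ?_
    by_contra! h
    exact hc (monomial_mem_of_le (Finsupp.single_le_iff.2 h.le) (hn i))
  have h0 : monomial 0 (1 : K) ∉ I := by
    simpa only [monomial_zero', C_1] using one_notMem_of_radical_eq_maxIdeal hrad
  obtain ⟨c, hc⟩ := hfin.exists_maximal ⟨0, h0⟩
  refine ⟨c, hc.prop, fun i => by_contra fun h => ?_⟩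
  have hle : c + Finsupp.single i 1 ≤ c := hc.le_of_ge h le_self_add
  simpa using Finsupp.le_def.1 hle i

section Matrix

variable [Fintype σ]

def socleMatrices (I : Ideal (MvPolynomial σ K)) : Set (Matrix σ σ ℕ) :=
  {A | (∀ i, Finsupp.equivFunOnFinite.symm (A i) ∈ minimalGenerators I) ∧
    (∀ i l, l ≠ i → A l i < A i i) ∧
    (monomial (Finsupp.equivFunOnFinite.symm (fun i => A i i - 1)) (1 : K) ∉ I)}

theorem isSocleExponent_diag_sub_one {I : Ideal (MvPolynomial σ K)} {A : Matrix σ σ ℕ}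
    (hA : A ∈ socleMatrices I) :
    IsSocleExponent I (Finsupp.equivFunOnFinite.symm fun i => A i i - 1) := by
  classical
  refine ⟨hA.2.2, fun i => monomial_mem_of_le (Finsupp.le_def.2 fun j => ?_) (hA.1 i).1⟩
  rcases eq_or_ne j i with rfl | hji
  · show A j j ≤ A j j - 1 + Finsupp.single j 1 j
    rw [Finsupp.single_eq_same]
    omega
  · simpa [Finsupp.single_apply, hji.symm] using Nat.le_sub_one_of_lt (hA.2.1 j i hji.symm)

theorem one_le_diag {I : Ideal (MvPolynomial σ K)} {A : Matrix σ σ ℕ}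
    (hA : A ∈ socleMatrices I) (i : σ) : 1 ≤ A i i := by
  by_contra! hi
  refine hA.2.2 (monomial_mem_of_le (Finsupp.le_def.2 fun j => ?_) (hA.1 i).1)
  rcases eq_or_ne j i with rfl | hji
  · simp [Nat.lt_one_iff.1 hi]
  · simpa using Nat.le_sub_one_of_lt (hA.2.1 j i hji.symm)

theorem exists_mem_socleMatrices {I : Ideal (MvPolynomial σ K)} {c : σ →₀ ℕ}
    (hc : IsSocleExponent I c) : ∃ A ∈ socleMatrices I, ∀ i, A i i = c i + 1 := by
  classical
  choose g hg hgc using fun i => exists_mem_minimalGenerators_le (hc.2 i)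
  have hoff (i j : σ) (hij : j ≠ i) : g i j ≤ c j := by
    simpa [Finsupp.single_apply, hij.symm] using Finsupp.le_def.1 (hgc i) j
  -- `g i i ≤ c i` would put `x^c` in `I`
  have hdiag (i : σ) : g i i = c i + 1 := by
    refine le_antisymm (by simpa using Finsupp.le_def.1 (hgc i) i) (Nat.succ_le_of_lt ?_)
    by_contra! hi
    refine hc.1 (monomial_mem_of_le (Finsupp.le_def.2 fun j => ?_) (hg i).1)
    rcases eq_or_ne j i with rfl | hji
    exacts [hi, hoff i j hji]
  refine ⟨fun i => g i, ⟨fun i => ?_, fun i l hli => ?_, ?_⟩, hdiag⟩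
  · simpa only [Finsupp.equivFunOnFinite_symm_coe] using hg i
  · show g l i < g i i
    rw [hdiag]
    exact Nat.lt_succ_of_le (hoff l i hli.symm)
  · simpa only [hdiag, Nat.add_sub_cancel, Finsupp.equivFunOnFinite_symm_coe] using hc.1

theorem image_socleMatrices (I : Ideal (MvPolynomial σ K)) :
    (fun A : Matrix σ σ ℕ => (∑ i, A i i) - Fintype.card σ) '' socleMatrices I =
      Finsupp.degree '' {c | IsSocleExponent I c} := by
  ext k
  constructor
  · rintro ⟨A, hA, rfl⟩
    refine ⟨_, isSocleExponent_diag_sub_one hA, ?_⟩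
    rw [Finsupp.degree_eq_sum]
    show ∑ i, (A i i - 1) = ∑ i, A i i - Fintype.card σ
    rw [← Finset.card_univ, Finset.card_eq_sum_ones,
      Finset.sum_tsub_distrib _ fun i _ => one_le_diag hA i]
  · rintro ⟨c, hc, rfl⟩
    obtain ⟨A, hA, hdiag⟩ := exists_mem_socleMatrices hc
    refine ⟨A, hA, ?_⟩
    simp only [hdiag, Finset.sum_add_distrib, Finsupp.degree_eq_sum, Finset.sum_const,
      Finset.card_univ, smul_eq_mul, mul_one, Nat.add_sub_cancel]

end Matrix

end

/-- explicit formula for the v-number of an 𝔪-primary monomial ideal. -/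
theorem vNumber_m_primary_formula {K : Type*} [Field K] (t : ℕ)
    (I : Ideal (MvPolynomial (Fin t) K))
    (hmon : IsMonomialIdeal I) (hprim : I.radical = maxIdeal K (Fin t)) :
    let M : Set (Matrix (Fin t) (Fin t) ℕ) :=
      {A | (∀ i, Finsupp.equivFunOnFinite.symm (A i) ∈ minimalGenerators I) ∧
        (∀ i l, l ≠ i → A l i < A i i) ∧
        (monomial (Finsupp.equivFunOnFinite.symm (fun i => A i i - 1)) (1 : K) ∉ I)}
    M.Nonempty ∧
      vNumber I = sInf ((fun A : Matrix (Fin t) (Fin t) ℕ => (∑ i, A i i) - t) '' M) := by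
  intro M
  have hM : (fun A : Matrix (Fin t) (Fin t) ℕ => (∑ i, A i i) - t) '' M =
      Finsupp.degree '' {c | IsSocleExponent I c} := by
    have h := image_socleMatrices (K := K) I
    rw [Fintype.card_fin] at h
    exact h
  obtain ⟨c, hc⟩ := exists_isSocleExponent hprim
  obtain ⟨A, hA, -⟩ := exists_mem_socleMatrices hc
  exact ⟨⟨A, hA⟩, by rw [vNumber_eq_sInf_degree_socle hmon hprim, hM]⟩
end
end

section
/- Let I ⊆ S = K[x_1,…,x_t] be a proper nonzero monomial ideal. Then there exist positive integers n_0 and d such that v(I^{n+1}) ≤ n·α(I) + d for all n ≥ n_0. -/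
open MvPolynomial

noncomputable section

/-! Fix a homogeneous `u ∈ I` of degree `α(I)`. Consider the colon ideals `(I^m : f)`, `f`
homogeneous, such that `f u^k ∉ I^(m+k)` for every `k`; the family is nonempty (`m = 1`, `f = 1`)
because `α(I) > 0`, so by Noetherianity it has a maximal member `Q = (I^m : f)`. As
`(I^m : f) ⊆ (I^(m+k) : f u^k)` and the latter is again in the family, maximality gives
`(I^(m+k) : f u^k) = Q` for all `k`. Maximality also makes `Q` prime: if `gh ∈ Q` with `g, h`
homogeneous and `h ∉ Q`, then no `f h u^k` lies in `I^(m+k)` (else `h ∈ (I^(m+k) : f u^k) = Q`),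
so `(I^m : f h) ⊇ Q` is in the family, equals `Q`, and contains `g`. Hence `f u^(n+1-m)`
witnesses `v(I^(n+1)) ≤ deg f + (n+1-m) α(I)`. -/

open SetLike

namespace Ideal

variable {ι σ A : Type*} [CommRing A] [SetLike σ A] {𝒜 : ι → σ}

theorem colon_pow_le_colon_pow_add_mul_pow {I : Ideal A} {u : A} (hu : u ∈ I) (f : A)
    (m k : ℕ) : (I ^ m).colon (span {f}) ≤ (I ^ (m + k)).colon (span {f * u ^ k}) := by
  intro r hr
  rw [mem_colon_span_singleton] at hr ⊢
  rw [pow_add, ← mul_assoc]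
  exact mul_mem_mul hr (pow_mem_pow hu k)

theorem IsHomogeneous.pow [AddSubmonoidClass σ A] [DecidableEq ι] [AddMonoid ι] [GradedRing 𝒜]
    {I : Ideal A} (hI : I.IsHomogeneous 𝒜) (m : ℕ) : (I ^ m).IsHomogeneous 𝒜 := by
  induction m with
  | zero => simpa only [pow_zero, one_eq_top] using IsHomogeneous.top 𝒜
  | succ m ih => simpa only [pow_succ] using ih.mul hI

theorem IsHomogeneous.colon_span_singleton [AddSubmonoidClass σ A] [DecidableEq ι]
    [AddRightCancelMonoid ι] [GradedRing 𝒜] {I : Ideal A} (hI : I.IsHomogeneous 𝒜) {f : A}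
    (hf : IsHomogeneousElem 𝒜 f) : (I.colon (span {f})).IsHomogeneous 𝒜 := by
  obtain ⟨j, hj⟩ := hf
  intro i g hg
  rw [mem_colon_span_singleton] at hg ⊢
  rw [← DirectSum.coe_decompose_mul_add_of_right_mem 𝒜 hj]
  exact hI (i + j) hg

variable (𝒜) in
def stableColons (I : Ideal A) (u : A) : Set (Ideal A) :=
  {Q | ∃ m f, IsHomogeneousElem 𝒜 f ∧ (∀ k, f * u ^ k ∉ I ^ (m + k)) ∧
    Q = (I ^ m).colon (span {f})}

variable {I : Ideal A} {u f : A} {m : ℕ}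

theorem colon_pow_add_mul_pow_eq_of_maximal [AddMonoid ι] [GradedMonoid 𝒜] (hu : u ∈ I)
    (hu' : IsHomogeneousElem 𝒜 u)
    (hmax : Maximal (· ∈ stableColons 𝒜 I u) ((I ^ m).colon (span {f})))
    (hf : IsHomogeneousElem 𝒜 f) (hfu : ∀ k, f * u ^ k ∉ I ^ (m + k)) (k : ℕ) :
    (I ^ (m + k)).colon (span {f * u ^ k}) = (I ^ m).colon (span {f}) := by
  refine hmax.eq_of_ge ⟨m + k, f * u ^ k, ?_, fun l => ?_, rfl⟩
    (colon_pow_le_colon_pow_add_mul_pow hu f m k)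
  · obtain ⟨j, hj⟩ := hf
    obtain ⟨i, hi⟩ := hu'
    exact ⟨j + k • i, mul_mem_graded hj (pow_mem_graded k hi)⟩
  · rw [mul_assoc, ← pow_add, add_assoc]
    exact hfu (k + l)

theorem IsHomogeneous.isPrime_of_maximal_stableColons [AddSubmonoidClass σ A]
    [AddCancelCommMonoid ι] [LinearOrder ι] [IsOrderedCancelAddMonoid ι] [GradedRing 𝒜]
    (hI : I.IsHomogeneous 𝒜) (hu : u ∈ I) (hu' : IsHomogeneousElem 𝒜 u) {Q : Ideal A}
    (hQ : Maximal (· ∈ stableColons 𝒜 I u) Q) : Q.IsPrime := by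
  obtain ⟨m, f, hf, hfu, rfl⟩ := hQ.prop
  have hstable := colon_pow_add_mul_pow_eq_of_maximal hu hu' hQ hf hfu
  refine (hI.pow m).colon_span_singleton hf |>.isPrime_of_homogeneous_mem_or_mem ?_ ?_
  · rw [ne_eq, eq_top_iff_one, mem_colon_span_singleton, one_mul]
    simpa using hfu 0
  · intro g h _ hh hgh
    rw [mem_colon_span_singleton] at hgh
    by_cases hfhu : ∃ k, f * h * u ^ k ∈ I ^ (m + k)
    · obtain ⟨k, hk⟩ := hfhu
      right
      rw [← hstable k, mem_colon_span_singleton, show h * (f * u ^ k) = f * h * u ^ k by ring]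
      exact hk
    · push Not at hfhu
      left
      have : (I ^ m).colon (span {f * h}) = (I ^ m).colon (span {f}) :=
        hQ.eq_of_ge ⟨m, f * h, hf.mul hh, hfhu, rfl⟩ fun r hr => by
          rw [mem_colon_span_singleton] at hr ⊢
          rw [← mul_assoc]
          exact mul_mem_right h _ hr
      rw [← this, mem_colon_span_singleton, show g * (f * h) = g * h * f by ring]
      exact hgh

theorem IsHomogeneous.exists_isPrime_colon_pow_stable [AddSubmonoidClass σ A]
    [AddCancelCommMonoid ι] [LinearOrder ι] [IsOrderedCancelAddMonoid ι] [GradedRing 𝒜]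
    [IsNoetherianRing A] (hI : I.IsHomogeneous 𝒜) (hu : u ∈ I) (hu' : IsHomogeneousElem 𝒜 u)
    (hne : (stableColons 𝒜 I u).Nonempty) :
    ∃ m f, IsHomogeneousElem 𝒜 f ∧ ((I ^ m).colon (span {f})).IsPrime ∧
      ∀ k, (I ^ (m + k)).colon (span {f * u ^ k}) = (I ^ m).colon (span {f}) := by
  obtain ⟨Q, hQ⟩ := WellFoundedGT.exists_maximal inferInstance _ hne
  obtain ⟨m, f, hf, hfu, rfl⟩ := hQ.prop
  exact ⟨m, f, hf, hI.isPrime_of_maximal_stableColons hu hu' hQ,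
    colon_pow_add_mul_pow_eq_of_maximal hu hu' hQ hf hfu⟩

theorem colon_span_singleton_mem_associatedPrimes_s2 {J : Ideal A} {g : A}
    (hg : (J.colon (span {g})).IsPrime) : J.colon (span {g}) ∈ associatedPrimes A (A ⧸ J) := by
  refine ⟨hg, Quotient.mk J g, ?_⟩
  rw [← hg.radical]
  congr 1
  ext r
  rw [Submodule.mem_colon_singleton, mem_colon_span_singleton, Submodule.mem_bot,
    Algebra.smul_def, Quotient.algebraMap_eq, ← map_mul, Quotient.eq_zero_iff_mem]

end Ideal

namespace MvPolynomial

attribute [local instance] MvPolynomial.gradedAlgebra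

variable {σ K : Type*} [Field K] {I : Ideal (MvPolynomial σ K)}

theorem _root_.IsMonomialIdeal.isHomogeneous (hI : IsMonomialIdeal I) :
    I.IsHomogeneous (homogeneousSubmodule σ K) := by
  obtain ⟨A, rfl⟩ := hI
  refine Ideal.homogeneous_span _ _ ?_
  rintro _ ⟨a, -, rfl⟩
  exact ⟨a.degree, (mem_homogeneousSubmodule _ _).2 (isHomogeneous_monomial 1 rfl)⟩

theorem homogeneousComponent_degree_ne_zero {f : MvPolynomial σ K} {x : σ →₀ ℕ}
    (hx : x ∈ f.support) : homogeneousComponent x.degree f ≠ 0 := by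
  classical
  intro h
  have := congr_arg (coeff x) h
  rw [coeff_homogeneousComponent, if_pos rfl, coeff_zero] at this
  exact mem_support_iff.1 hx this

theorem alphaNumber_le_degree (hI : I.IsHomogeneous (homogeneousSubmodule σ K))
    {f : MvPolynomial σ K} (hf : f ∈ I) {x : σ →₀ ℕ} (hx : x ∈ f.support) :
    alphaNumber I ≤ x.degree :=
  Nat.sInf_le ⟨_, homogeneousComponent_mem_of_mem hI hf _, homogeneousComponent_degree_ne_zero hx,
    (homogeneousComponent_isHomogeneous _ _).totalDegree (homogeneousComponent_degree_ne_zero hx)⟩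

theorem le_idealOfVars_pow_alphaNumber (hI : I.IsHomogeneous (homogeneousSubmodule σ K)) :
    I ≤ idealOfVars σ K ^ alphaNumber I := fun _ hf =>
  (mem_pow_idealOfVars_iff _ _).2 fun _ hx => alphaNumber_le_degree hI hf hx

theorem exists_isHomogeneous_alphaNumber (hI : I.IsHomogeneous (homogeneousSubmodule σ K))
    (hbot : I ≠ ⊥) : ∃ u ∈ I, u ≠ 0 ∧ u.IsHomogeneous (alphaNumber I) := by
  obtain ⟨f, hfI, hf0⟩ := Submodule.exists_mem_ne_zero_of_ne_bot hbot
  have hne : {d | ∃ g ∈ I, g ≠ 0 ∧ g.totalDegree = d}.Nonempty := ⟨_, f, hfI, hf0, rfl⟩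
  obtain ⟨g, hgI, hg0, hgα⟩ := Nat.sInf_mem hne
  obtain ⟨x, hx⟩ := support_nonempty.2 hg0
  have hxα : x.degree = alphaNumber I :=
    le_antisymm ((le_totalDegree hx).trans_eq hgα) (alphaNumber_le_degree hI hgI hx)
  exact ⟨_, homogeneousComponent_mem_of_mem hI hgI _, homogeneousComponent_degree_ne_zero hx,
    hxα ▸ homogeneousComponent_isHomogeneous _ _⟩

theorem alphaNumber_pos (hI : I.IsHomogeneous (homogeneousSubmodule σ K)) (hbot : I ≠ ⊥)
    (htop : I ≠ ⊤) : 0 < alphaNumber I := by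
  obtain ⟨u, huI, hu0, hu⟩ := exists_isHomogeneous_alphaNumber hI hbot
  refine Nat.pos_of_ne_zero fun hα => htop (Ideal.eq_top_of_isUnit_mem _ huI ?_)
  have hC : u = C (coeff 0 u) := totalDegree_eq_zero_iff_eq_C.1 ((hu.totalDegree hu0).trans hα)
  have hc : coeff 0 u ≠ 0 := fun h => hu0 (by rw [hC, h, C_0])
  exact hC ▸ hc.isUnit.map C

theorem pow_notMem_pow_succ (hI : I.IsHomogeneous (homogeneousSubmodule σ K))
    {u : MvPolynomial σ K} (hu0 : u ≠ 0) (hu : u.IsHomogeneous (alphaNumber I))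
    (hα : 0 < alphaNumber I) (k : ℕ) : u ^ k ∉ I ^ (k + 1) := by
  intro hmem
  have hle : I ^ (k + 1) ≤ idealOfVars σ K ^ (alphaNumber I * (k + 1)) :=
    pow_mul (idealOfVars σ K) _ _ ▸ Ideal.pow_right_mono (le_idealOfVars_pow_alphaNumber hI) _
  obtain ⟨x, hx⟩ := support_nonempty.2 (pow_ne_zero k hu0)
  have hlow := (mem_pow_idealOfVars_iff _ _).1 (hle hmem) x hx
  have hhigh : x.degree ≤ alphaNumber I * k :=
    (le_totalDegree hx).trans_eq ((hu.pow k).totalDegree (pow_ne_zero k hu0))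
  rw [mul_add_one] at hlow
  omega

end MvPolynomial

theorem vNumber_le_of_isPrime_colon {σ K : Type*} [Field K] {J : Ideal (MvPolynomial σ K)}
    {f : MvPolynomial σ K} {k : ℕ} (hf : f.IsHomogeneous k)
    (hprime : (J.colon (Ideal.span {f})).IsPrime) : vNumber J ≤ k :=
  Nat.sInf_le ⟨f, hf, Ideal.colon_span_singleton_mem_associatedPrimes_s2 hprime⟩

attribute [local instance] MvPolynomial.gradedAlgebra in
theorem Ideal.IsHomogeneous.exists_vNumber_pow_succ_le {σ K : Type*} [Field K] [Finite σ]
    {I : Ideal (MvPolynomial σ K)} (hI : I.IsHomogeneous (homogeneousSubmodule σ K))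
    (hbot : I ≠ ⊥) (htop : I ≠ ⊤) :
    ∃ n₀ d : ℕ, 0 < n₀ ∧ 0 < d ∧
      ∀ n, n₀ ≤ n → vNumber (I ^ (n + 1)) ≤ n * alphaNumber I + d := by
  obtain ⟨u, huI, hu0, hu⟩ := exists_isHomogeneous_alphaNumber hI hbot
  have hα := alphaNumber_pos hI hbot htop
  have hne : (stableColons (homogeneousSubmodule σ K) I u).Nonempty :=
    ⟨_, 1, 1, isHomogeneousElem_one _, fun k => by
      simpa only [one_mul, add_comm 1 k] using pow_notMem_pow_succ hI hu0 hu hα k, rfl⟩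
  obtain ⟨m, f, ⟨j, hf⟩, hprime, hstable⟩ :=
    hI.exists_isPrime_colon_pow_stable huI ⟨_, hu⟩ hne
  have hm : m ≠ 0 := by
    rintro rfl
    exact hprime.ne_top (by simp)
  refine ⟨m, j + 1, Nat.pos_of_ne_zero hm, j.succ_pos, fun n hn => ?_⟩
  obtain ⟨k, hk⟩ : ∃ k, n + 1 = m + k := ⟨n + 1 - m, by omega⟩
  have hvk : vNumber (I ^ (m + k)) ≤ j + alphaNumber I * k :=
    vNumber_le_of_isPrime_colon (hf.mul (hu.pow k)) (hstable k ▸ hprime)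
  have hkn : alphaNumber I * k ≤ n * alphaNumber I :=
    (mul_comm _ _).trans_le (Nat.mul_le_mul_right _ (by omega))
  rw [hk]
  omega

/-- for a proper nonzero monomial ideal, v(I^{n+1}) ≤ n·α(I) + d eventually. -/
theorem vNumber_pow_linear_upper_bound {K : Type*} [Field K] (t : ℕ)
    (I : Ideal (MvPolynomial (Fin t) K))
    (hmon : IsMonomialIdeal I) (hbot : I ≠ ⊥) (htop : I ≠ ⊤) :
    ∃ n₀ d : ℕ, 0 < n₀ ∧ 0 < d ∧
      ∀ n, n₀ ≤ n → vNumber (I ^ (n + 1)) ≤ n * alphaNumber I + d :=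
  hmon.isHomogeneous.exists_vNumber_pow_succ_le hbot htop
end
end

section
/- Let I ⊆ S = K[x_1,…,x_t] be an 𝔪-primary monomial ideal. Then v(I) ≤ reg(S/I). Since dim(S/I) = 0, here reg(S/I) equals the largest integer k such that the degree-k graded component of S/I is nonzero (equivalently, the largest degree of a monomial of S not belonging to I); that is, v(I) ≤ max{ k ≥ 0 : there exists a monomial of degree k not in I }. -/
open MvPolynomial

noncomputable section

/-! The monomial `f = x^a` of largest degree outside `I` exists because some power of each
variable lies in `I`; by maximality `x_i f ∈ I` for all `i`, so `(I : f) ⊇ 𝔪`, and `f ∉ I` forces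
`(I : f) = 𝔪`. An `𝔪`-primary ideal has `𝔪` as its only associated prime, so `deg f = reg(S/I)`
bounds `v(I)`. -/

theorem Ideal.colon_span_singleton_eq_of_isMaximal {R : Type*} [CommRing R] {I M : Ideal R}
    {f : R} (hM : M.IsMaximal) (hle : M ≤ I.colon (Ideal.span {f})) (hf : f ∉ I) :
    I.colon (Ideal.span {f}) = M := by
  refine (hM.eq_of_le (fun htop => hf ?_) hle).symm
  simpa using Ideal.mem_colon_span_singleton.mp ((Ideal.eq_top_iff_one _).mp htop)

namespace MvPolynomial

theorem maxIdeal_eq_ker_constantCoeff (K σ : Type*) [Field K] :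
    maxIdeal K σ = RingHom.ker (constantCoeff : MvPolynomial σ K →+* K) := by
  ext p
  rw [maxIdeal, ← Set.image_univ, mem_ideal_span_X_image, RingHom.mem_ker, constantCoeff_eq]
  constructor
  · intro h
    by_contra hc
    obtain ⟨i, -, hi⟩ := h 0 (mem_support_iff.mpr hc)
    exact hi rfl
  · intro h m hm
    have hm0 : m ≠ 0 := by rintro rfl; exact mem_support_iff.mp hm h
    obtain ⟨i, hi⟩ := Finsupp.ne_iff.mp hm0
    exact ⟨i, trivial, hi⟩

theorem maxIdeal_isMaximal (K σ : Type*) [Field K] : (maxIdeal K σ).IsMaximal := by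
  rw [maxIdeal_eq_ker_constantCoeff]
  exact RingHom.ker_isMaximal_of_surjective _ fun r => ⟨C r, constantCoeff_C σ r⟩

section StandardMonomials

variable {σ R : Type*} [CommSemiring R]

theorem monomial_mem_of_X_pow_mem {I : Ideal (MvPolynomial σ R)} {i : σ} {n : ℕ}
    {a : σ →₀ ℕ} (hI : X i ^ n ∈ I) (hn : n ≤ a i) : monomial a (1 : R) ∈ I :=
  I.mem_of_dvd (X_pow_eq_monomial (R := R) ▸
    monomial_dvd_monomial.mpr ⟨Or.inr (Finsupp.single_le_iff.mpr hn), one_dvd _⟩) hI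

variable [Fintype σ]

/-- For `𝔪`-primary `I`, the supremum is `reg(S/I)`. -/
def standardMonomialDegrees (I : Ideal (MvPolynomial σ R)) : Set ℕ :=
  {k | ∃ a : σ →₀ ℕ, monomial a (1 : R) ∉ I ∧ ∑ i, a i = k}

theorem zero_mem_standardMonomialDegrees {I : Ideal (MvPolynomial σ R)} (hI : I ≠ ⊤) :
    0 ∈ standardMonomialDegrees I :=
  ⟨0, fun h => hI ((Ideal.eq_top_iff_one I).mpr (by simpa using h)), by simp⟩

theorem bddAbove_standardMonomialDegrees {I : Ideal (MvPolynomial σ R)}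
    (hI : ∀ i, X i ∈ I.radical) : BddAbove (standardMonomialDegrees I) := by
  choose n hn using hI
  refine ⟨∑ i, n i, ?_⟩
  rintro _ ⟨a, haI, rfl⟩
  refine Finset.sum_le_sum fun i _ => ?_
  by_contra! hlt
  exact haI (monomial_mem_of_X_pow_mem (hn i) hlt.le)

theorem X_mul_monomial_mem_of_degree_eq_sSup {I : Ideal (MvPolynomial σ R)}
    (hbdd : BddAbove (standardMonomialDegrees I)) {a : σ →₀ ℕ}
    (ha : ∑ i, a i = sSup (standardMonomialDegrees I)) (i : σ) :
    X i * monomial a (1 : R) ∈ I := by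
  by_contra hout
  have hmem : sSup (standardMonomialDegrees I) + 1 ∈ standardMonomialDegrees I := by
    refine ⟨Finsupp.single i 1 + a, ?_, ?_⟩
    · rwa [X, monomial_mul, one_mul] at hout
    · simp [Finset.sum_add_distrib, ha, add_comm]
  have := le_csSup hbdd hmem
  omega

end StandardMonomials

end MvPolynomial

theorem vNumber_le_reg_m_primary_general {K : Type*} [Field K] (t : ℕ)
    (I : Ideal (MvPolynomial (Fin t) K))
    (hprim : I.radical = maxIdeal K (Fin t)) :
    vNumber I ≤ sSup {k : ℕ | ∃ a : Fin t →₀ ℕ, monomial a (1 : K) ∉ I ∧ (∑ i, a i) = k} := by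
  change vNumber I ≤ sSup (standardMonomialDegrees I)
  have hmax : I.radical.IsMaximal := hprim ▸ maxIdeal_isMaximal K (Fin t)
  have hbdd : BddAbove (standardMonomialDegrees I) :=
    bddAbove_standardMonomialDegrees fun i => hprim ▸ Ideal.subset_span ⟨i, rfl⟩
  have hne : I ≠ ⊤ := fun h => hmax.ne_top (Ideal.radical_eq_top.mpr h)
  obtain ⟨a, haI, hdeg⟩ := Nat.sSup_mem ⟨0, zero_mem_standardMonomialDegrees hne⟩ hbdd
  have hcolon : I.colon (Ideal.span {monomial a (1 : K)}) = maxIdeal K (Fin t) := by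
    refine Ideal.colon_span_singleton_eq_of_isMaximal (maxIdeal_isMaximal K (Fin t)) ?_ haI
    rw [maxIdeal, Ideal.span_le, Set.range_subset_iff]
    exact fun i => Ideal.mem_colon_span_singleton.mpr
      (X_mul_monomial_mem_of_degree_eq_sSup hbdd hdeg i)
  have hass : I.colon (Ideal.span {monomial a (1 : K)}) ∈
      associatedPrimes _ (MvPolynomial (Fin t) K ⧸ I) := by
    rw [associatedPrimes.eq_singleton_of_isPrimary (Ideal.isPrimary_of_isMaximal_radical hmax),
      hcolon, hprim, Set.mem_singleton_iff]
  exact Nat.sInf_le ⟨_, isHomogeneous_monomial _ ((Finsupp.degree_eq_sum a).trans hdeg), hass⟩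

/-- for an 𝔪-primary monomial ideal, v(I) ≤ reg(S/I), where reg(S/I) is the
largest degree of a monomial not in I. -/
theorem vNumber_le_reg_m_primary {K : Type*} [Field K] (t : ℕ)
    (I : Ideal (MvPolynomial (Fin t) K))
    (hmon : IsMonomialIdeal I) (hprim : I.radical = maxIdeal K (Fin t)) :
    vNumber I ≤ sSup {k : ℕ | ∃ a : Fin t →₀ ℕ, monomial a (1 : K) ∉ I ∧ (∑ i, a i) = k} :=
  vNumber_le_reg_m_primary_general t I hprim
end
end

section
/- Let n ≥ 2 and let A be an independent set of the path P_n such that the neighborhood N_{P_n}(A) is a vertex cover of P_n and |A| is minimum among all independent sets with this property. Then A does not contain both endpoints x_1 and x_n of the path. -/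
/-! The neighbours of a vertex `a` of `P_n` meet at most the four edges `{i, i + 1}` with
`a - 2 ≤ i ≤ a + 1`, and if `N(A)` covers all `n - 1` edges this gives `4 |A| ≥ n - 1`. When both
endpoints lie in `A`, the neighbour of each meets only two edges, which sharpens the count to
`4 |A| ≥ n + 3`. But the vertices whose (0-based) index is `≡ c (mod 4)`, for `c ∈ {1, 2}` with
`c ≢ n`, form an independent set of at most `(n + 2) / 4` vertices whose neighbourhood covers
every edge, contradicting the minimality of `|A|`. -/

open MvPolynomial

noncomputable section

/-- `A` is an independent (stable) set of `G`. -/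
def IsIndependentSet {V : Type*} (G : SimpleGraph V) (A : Set V) : Prop :=
  ∀ u ∈ A, ∀ v ∈ A, ¬ G.Adj u v

/-- `C` is a vertex cover of `G`: every edge meets `C`. -/
def IsVertexCover {V : Type*} (G : SimpleGraph V) (C : Set V) : Prop :=
  ∀ u v, G.Adj u v → u ∈ C ∨ v ∈ C

/-- The neighborhood `N_G(A)` of a set of vertices `A`. -/
def neighborSetOf {V : Type*} (G : SimpleGraph V) (A : Set V) : Set V :=
  {x | ∃ a ∈ A, G.Adj x a}

open SimpleGraph (pathGraph pathGraph_adj)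

theorem le_mul_card_of_range_subset_biUnion_Ico {ι : Type*} (s : Finset ι) (f : ι → ℕ)
    (k m : ℕ) (h : Finset.range m ⊆ s.biUnion fun i => Finset.Ico (f i) (f i + k)) :
    m ≤ k * s.card :=
  calc m = (Finset.range m).card := (Finset.card_range m).symm
    _ ≤ (s.biUnion fun i => Finset.Ico (f i) (f i + k)).card := Finset.card_le_card h
    _ ≤ ∑ i ∈ s, (Finset.Ico (f i) (f i + k)).card := Finset.card_biUnion_le
    _ = k * s.card := by simp [mul_comm]

section PathGraph

variable {n : ℕ}

theorem exists_mem_near_of_isVertexCover_neighborSetOf {A : Set (Fin n)}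
    (hcover : IsVertexCover (pathGraph n) (neighborSetOf (pathGraph n) A))
    (i : ℕ) (hi : i + 1 < n) : ∃ a ∈ A, i ≤ (a : ℕ) + 1 ∧ (a : ℕ) ≤ i + 2 := by
  have hedge : (pathGraph n).Adj ⟨i, by omega⟩ ⟨i + 1, hi⟩ := pathGraph_adj.mpr (Or.inl rfl)
  rcases hcover _ _ hedge with ⟨a, ha, hadj⟩ | ⟨a, ha, hadj⟩ <;>
  · simp only [pathGraph_adj] at hadj
    exact ⟨a, ha, by omega⟩

theorem add_three_le_four_mul_ncard_of_isVertexCover_neighborSetOf (hn : 0 < n)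
    {A : Set (Fin n)} (hcover : IsVertexCover (pathGraph n) (neighborSetOf (pathGraph n) A))
    (hfirst : (⟨0, hn⟩ : Fin n) ∈ A) (hlast : (⟨n - 1, by omega⟩ : Fin n) ∈ A) :
    n + 3 ≤ 4 * A.ncard := by
  classical
  rw [Set.ncard_eq_toFinset_card']
  -- The vertex `a` is charged for the edges `{i, i + 1}` with `a - 2 ≤ i ≤ a + 1`, shifted
  -- by `2` to stay in `ℕ`; the two endpoints also pay for two out-of-range "edges" each.
  refine le_mul_card_of_range_subset_biUnion_Ico A.toFinset (fun a => a) 4 (n + 3) ?_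
  intro j hj
  simp only [Finset.mem_range] at hj
  simp only [Finset.mem_biUnion, Set.mem_toFinset, Finset.mem_Ico]
  obtain hj' | hj' | hj' : j ≤ 1 ∨ n + 1 ≤ j ∨ (2 ≤ j ∧ j ≤ n) := by omega
  · exact ⟨⟨0, hn⟩, hfirst, by simp only; omega⟩
  · exact ⟨⟨n - 1, by omega⟩, hlast, by simp only; omega⟩
  · obtain ⟨a, ha, hlo, hhi⟩ := exists_mem_near_of_isVertexCover_neighborSetOf hcover (j - 2)
      (by omega)
    exact ⟨a, ha, by omega, by omega⟩

def everyFourthVertex (n c : ℕ) : Set (Fin n) :=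
  {x | (x : ℕ) ≡ c [MOD 4]}

theorem isIndependentSet_everyFourthVertex (c : ℕ) :
    IsIndependentSet (pathGraph n) (everyFourthVertex n c) := by
  intro u hu v hv hadj
  rw [pathGraph_adj] at hadj
  simp only [everyFourthVertex, Set.mem_ofPred_eq, Nat.ModEq] at hu hv
  omega

theorem isVertexCover_neighborSetOf_everyFourthVertex {c : ℕ} (hc : c ≤ 2) (hcn : n % 4 ≠ c) :
    IsVertexCover (pathGraph n) (neighborSetOf (pathGraph n) (everyFourthVertex n c)) := by
  intro u v huv
  wlog h : (u : ℕ) + 1 = v generalizing u v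
  · exact (this v u huv.symm ((pathGraph_adj.mp huv).resolve_left h)).symm
  -- The unique `j ≡ c` in `[u - 1, u + 2]` is a vertex (`c ≤ 2`, `n ≢ c`) adjacent to `u` or `v`.
  obtain ⟨j, hjc, hlo, hhi, hjn⟩ :
      ∃ j, j ≡ c [MOD 4] ∧ (u : ℕ) ≤ j + 1 ∧ j ≤ (u : ℕ) + 2 ∧ j < n :=
    ⟨u + 2 - (u + 2 - c) % 4, by unfold Nat.ModEq; omega, by omega, by omega, by omega⟩
  have hj : (⟨j, hjn⟩ : Fin n) ∈ everyFourthVertex n c := hjc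
  obtain hu | hv : ((u : ℕ) + 1 = j ∨ j + 1 = u) ∨ ((v : ℕ) + 1 = j ∨ j + 1 = v) := by omega
  · exact .inl ⟨_, hj, pathGraph_adj.mpr hu⟩
  · exact .inr ⟨_, hj, pathGraph_adj.mpr hv⟩

theorem four_mul_ncard_everyFourthVertex_le {c : ℕ} (hc : c % 4 ≠ 0) :
    4 * (everyFourthVertex n c).ncard ≤ n + 2 := by
  classical
  have hcount : (everyFourthVertex n c).ncard = Nat.count (· ≡ c [MOD 4]) n := by
    rw [Nat.count_eq_card_filter_range, ← Set.ncard_coe_finset,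
      ← Set.ncard_image_of_injective _ Fin.val_injective]
    congr 1
    ext x
    simp [everyFourthVertex, Fin.exists_iff, and_comm]
  rw [hcount, Nat.count_modEq_card n (by norm_num) c]
  split_ifs <;> omega

end PathGraph

/-- a minimum-size independent set of `P_n` whose neighborhood is a vertex cover
cannot contain both endpoints. -/
theorem path_min_stable_set_no_both_endpoints (n : ℕ) (hn : 2 ≤ n) (A : Set (Fin n))
    (hcover : IsVertexCover (SimpleGraph.pathGraph n)
      (neighborSetOf (SimpleGraph.pathGraph n) A))
    (hmin : ∀ B : Set (Fin n), IsIndependentSet (SimpleGraph.pathGraph n) B →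
      IsVertexCover (SimpleGraph.pathGraph n) (neighborSetOf (SimpleGraph.pathGraph n) B) →
      A.ncard ≤ B.ncard) :
    ¬((⟨0, by omega⟩ : Fin n) ∈ A ∧ (⟨n - 1, by omega⟩ : Fin n) ∈ A) := by
  rintro ⟨hfirst, hlast⟩
  have hA := add_three_le_four_mul_ncard_of_isVertexCover_neighborSetOf (by omega) hcover
    hfirst hlast
  obtain ⟨c, hc1, hc2, hcn⟩ : ∃ c, 1 ≤ c ∧ c ≤ 2 ∧ n % 4 ≠ c :=
    ⟨if n % 4 = 1 then 2 else 1, by split_ifs <;> omega, by split_ifs <;> omega,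
      by split_ifs <;> omega⟩
  have hB := four_mul_ncard_everyFourthVertex_le (n := n) (c := c) (by omega)
  have hAB := hmin _ (isIndependentSet_everyFourthVertex c)
    (isVertexCover_neighborSetOf_everyFourthVertex hc2 hcn)
  omega
end
end

section
/- Let I ⊆ S = K[x_1,…,x_t] be a proper nonzero monomial ideal, let n ≥ 1, and let f be a monomial such that (I^n : f) is an associated prime of S/I^n and deg f = v(I^n). If g is a monomial that properly divides f (i.e., g divides f and g ≠ f), then v(I^n) = v(I^n : g) + deg g. -/
open MvPolynomial

noncomputable section

/-!
If `(I : f)` is an associated prime and `f = g h`, then `((I : g) : h) = (I : f)`, so `h` witnesses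
`v(I : g) ≤ deg h`; conversely a witness `f'` for `v(I : g)` gives the witness `f' g` for `I`,
so `v(I) ≤ v(I : g) + deg g`. When `deg f = v(I)` the two inequalities force equality.
-/

namespace Ideal

variable {R : Type*} [CommRing R]

theorem colon_bot_singleton_quotient_mk (J : Ideal R) (g : R) :
    (⊥ : Submodule R (R ⧸ J)).colon {Quotient.mk J g} = J.colon (span {g}) := by
  ext r
  rw [Submodule.mem_colon_singleton, Submodule.mem_bot, mem_colon_span_singleton,
    ← Quotient.eq_zero_iff_mem]
  rfl

theorem colon_span_singleton_colon_span_singleton (J : Ideal R) (f g : R) :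
    (J.colon (span {f})).colon (span {g}) = J.colon (span {g * f}) := by
  ext r
  simp only [mem_colon_span_singleton, mul_assoc]

theorem colon_span_singleton_mem_associatedPrimes_iff (J : Ideal R) (g : R) :
    J.colon (span {g}) ∈ associatedPrimes R (R ⧸ J) ↔ (J.colon (span {g})).IsPrime :=
  ⟨fun h ↦ h.1, fun hP ↦
    ⟨hP, Quotient.mk J g, by rw [colon_bot_singleton_quotient_mk, hP.radical]⟩⟩

theorem colon_colon_mem_associatedPrimes_iff (J : Ideal R) (f g : R) :
    (J.colon (span {f})).colon (span {g}) ∈ associatedPrimes R (R ⧸ J.colon (span {f})) ↔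
      J.colon (span {g * f}) ∈ associatedPrimes R (R ⧸ J) := by
  rw [colon_span_singleton_mem_associatedPrimes_iff, colon_span_singleton_mem_associatedPrimes_iff,
    colon_span_singleton_colon_span_singleton]

end Ideal

section vNumber

variable {σ K : Type*} [Field K] {I : Ideal (MvPolynomial σ K)}

theorem vNumber_le_of_isHomogeneous {f : MvPolynomial σ K} {k : ℕ} (hf : f.IsHomogeneous k)
    (hP : I.colon (Ideal.span {f}) ∈ associatedPrimes _ (MvPolynomial σ K ⧸ I)) :
    vNumber I ≤ k :=
  Nat.sInf_le ⟨f, hf, hP⟩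

theorem exists_isHomogeneous_vNumber {f : MvPolynomial σ K} {k : ℕ} (hf : f.IsHomogeneous k)
    (hP : I.colon (Ideal.span {f}) ∈ associatedPrimes _ (MvPolynomial σ K ⧸ I)) :
    ∃ f' : MvPolynomial σ K, f'.IsHomogeneous (vNumber I) ∧
      I.colon (Ideal.span {f'}) ∈ associatedPrimes _ (MvPolynomial σ K ⧸ I) :=
  Nat.sInf_mem (s := {k | ∃ f : MvPolynomial σ K, f.IsHomogeneous k ∧
    I.colon (Ideal.span {f}) ∈ associatedPrimes _ (MvPolynomial σ K ⧸ I)}) ⟨k, f, hf, hP⟩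

theorem vNumber_colon_le_of_mul {g h : MvPolynomial σ K} {e : ℕ} (hh : h.IsHomogeneous e)
    (hP : I.colon (Ideal.span {h * g}) ∈ associatedPrimes _ (MvPolynomial σ K ⧸ I)) :
    vNumber (I.colon (Ideal.span {g})) ≤ e :=
  vNumber_le_of_isHomogeneous hh ((Ideal.colon_colon_mem_associatedPrimes_iff I g h).2 hP)

theorem vNumber_le_vNumber_colon_add {g h : MvPolynomial σ K} {d e : ℕ}
    (hg : g.IsHomogeneous d) (hh : h.IsHomogeneous e)
    (hP : I.colon (Ideal.span {h * g}) ∈ associatedPrimes _ (MvPolynomial σ K ⧸ I)) :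
    vNumber I ≤ vNumber (I.colon (Ideal.span {g})) + d := by
  obtain ⟨f', hf', hf'P⟩ :=
    exists_isHomogeneous_vNumber hh ((Ideal.colon_colon_mem_associatedPrimes_iff I g h).2 hP)
  exact vNumber_le_of_isHomogeneous (hf'.mul hg)
    ((Ideal.colon_colon_mem_associatedPrimes_iff I g f').1 hf'P)

theorem vNumber_eq_vNumber_colon_add {g h : MvPolynomial σ K} {d e : ℕ}
    (hg : g.IsHomogeneous d) (hh : h.IsHomogeneous e)
    (hP : I.colon (Ideal.span {h * g}) ∈ associatedPrimes _ (MvPolynomial σ K ⧸ I))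
    (hdeg : e + d = vNumber I) :
    vNumber I = vNumber (I.colon (Ideal.span {g})) + d := by
  have hcolon := vNumber_colon_le_of_mul hh hP
  have hle := vNumber_le_vNumber_colon_add hg hh hP
  omega

end vNumber

theorem vNumber_colon_proper_divisor_general {K : Type*} [Field K] (t : ℕ)
    (I : Ideal (MvPolynomial (Fin t) K))
    (n : ℕ) (a : Fin t →₀ ℕ)
    (hass : Submodule.colon (I ^ n) (Ideal.span {(monomial a (1 : K))}) ∈
      associatedPrimes (MvPolynomial (Fin t) K) (MvPolynomial (Fin t) K ⧸ (I ^ n)))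
    (hdeg : (∑ i, a i) = vNumber (I ^ n))
    (c : Fin t →₀ ℕ) (hdvd : c ≤ a) :
    vNumber (I ^ n) =
      vNumber (Submodule.colon (I ^ n) (Ideal.span {(monomial c (1 : K))})) + ∑ i, c i := by
  have hsplit : a - c + c = a := tsub_add_cancel_of_le hdvd
  have hmul : monomial (a - c) (1 : K) * monomial c 1 = monomial a 1 := by
    rw [monomial_mul, one_mul, hsplit]
  rw [← hmul] at hass
  refine vNumber_eq_vNumber_colon_add (isHomogeneous_monomial 1 (Finsupp.degree_eq_sum c))
    (isHomogeneous_monomial 1 rfl) hass ?_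
  rw [← hdeg, ← Finsupp.degree_eq_sum, ← Finsupp.degree_eq_sum, ← map_add, hsplit]

/-- if the monomial x^a realizes v(I^n) (i.e. (I^n : x^a) is an associated prime
of S/I^n and deg x^a = v(I^n)), and x^c properly divides x^a, then
v(I^n) = v(I^n : x^c) + deg x^c. -/
theorem vNumber_colon_proper_divisor {K : Type*} [Field K] (t : ℕ)
    (I : Ideal (MvPolynomial (Fin t) K))
    (hmon : IsMonomialIdeal I) (hbot : I ≠ ⊥) (htop : I ≠ ⊤)
    (n : ℕ) (hn : 1 ≤ n) (a : Fin t →₀ ℕ)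
    (hass : Submodule.colon (I ^ n) (Ideal.span {(monomial a (1 : K))}) ∈
      associatedPrimes (MvPolynomial (Fin t) K) (MvPolynomial (Fin t) K ⧸ (I ^ n)))
    (hdeg : (∑ i, a i) = vNumber (I ^ n))
    (c : Fin t →₀ ℕ) (hdvd : c ≤ a) (hne : c ≠ a) :
    vNumber (I ^ n) =
      vNumber (Submodule.colon (I ^ n) (Ideal.span {(monomial c (1 : K))})) + ∑ i, c i :=
  vNumber_colon_proper_divisor_general t I n a hass hdeg c hdvd
end
end
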